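/- Let β₀ > 0 and let (X_{k,j}), indexed by integers k ≥ 0 and 1 ≤ j ≤ 2^k, be real-valued random variables on a common probability space satisfying: (i) E[exp(β₀|X_{0,1}|)] < ∞ and E[X_{0,1}] = 0; (ii) for all (k,j), X_{k,j} has the same distribution as 2^{−k}·X_{0,1}; (iii) for each fixed k, the random variables (X_{k,j})_{1 ≤ j ≤ 2^k} are mutually independent. Then the partial sums S_n = ∑_{k=0}^{n} ∑_{j=1}^{2^k} X_{k,j} converge almost surely as n → ∞, and the limit X = ∑_{k=0}^{∞} ∑_{j=1}^{2^k} X_{k,j} satisfies E[exp(β X)] < ∞ for every β with |β| < β₀/2. -/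

import Mathlib

/-!
For a centred variable with `E exp (β₀ |X|) = M`, the inequality `exp u ≤ 1 + u + u² exp |u|`
gives `E exp (t X) ≤ exp (2 M t² / d²)` whenever `|t| + d ≤ β₀`. Scaling by `2⁻ᵏ` and independence
within a level turn this into `E exp (t T k) ≤ exp (K t² / 2ᵏ)` for the level sum `T k = ∑ⱼ X k j`,
on the window `|t| ≤ (β₀ - d) 2ᵏ`.

Different levels need not be independent, so the series is controlled by convexity of `exp`: for
weights `w k > 0` with `∑ w k ≤ 1`, `exp (b ∑ |T k|) ≤ 1 + ∑ w k exp (b |T k| / w k)`. The weights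
`w k = θ / 2ᵏ + e (3/4)ᵏ` with `θ = b / (β₀ - d)` keep `b / w k` inside the window of level `k`
and, since `2 (3/4)² > 1`, keep the exponent `K (b / w k)² / 2ᵏ` bounded. Their sum is at most
`2 θ + 4 e`, which can be made `≤ 1` exactly because `b < β₀ / 2`. Taking some `b > 0` also shows
that `∑ |T k|` is finite almost surely.
-/

open MeasureTheory Real Filter
open ProbabilityTheory Finset
open scoped ENNReal

theorem exp_le_one_add_add_sq_mul_exp_abs (u : ℝ) : exp u ≤ 1 + u + u ^ 2 * exp |u| := by
  have hinv : exp u * (1 - u) ≤ 1 := by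
    have h := add_one_le_exp (-u)
    have hmul : exp u * exp (-u) = 1 := by rw [← exp_add, add_neg_cancel, exp_zero]
    nlinarith [exp_pos u]
  rcases le_or_gt 0 u with hu | hu
  · rw [abs_of_nonneg hu]
    nlinarith [exp_pos u]
  · rw [abs_of_neg hu]
    have h1 : 1 ≤ exp (-u) := one_le_exp (by linarith)
    have h2 : (exp u - (1 + u + u ^ 2)) * (1 - u) ≤ 0 := by nlinarith [pow_pos (neg_pos.2 hu) 3]
    have h3 : exp u ≤ 1 + u + u ^ 2 := by nlinarith
    nlinarith [sq_nonneg u]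

theorem sq_le_two_div_sq_mul_exp_mul_abs {d : ℝ} (hd : 0 < d) (x : ℝ) :
    x ^ 2 ≤ 2 / d ^ 2 * exp (d * |x|) := by
  have h := pow_div_factorial_le_exp (d * |x|) (by positivity) 2
  rw [mul_pow, sq_abs, Nat.factorial_two, Nat.cast_two] at h
  rw [div_mul_eq_mul_div, le_div_iff₀ (by positivity)]
  linarith

theorem exp_mul_le_one_add_mul_add_sq_mul_exp_mul_abs {β d t : ℝ} (hd : 0 < d) (ht : |t| + d ≤ β)
    (z : ℝ) : exp (t * z) ≤ 1 + t * z + 2 / d ^ 2 * t ^ 2 * exp (β * |z|) := by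
  have hsq := sq_le_two_div_sq_mul_exp_mul_abs hd z
  have hexp : exp (d * |z|) * exp |t * z| ≤ exp (β * |z|) := by
    rw [← exp_add, exp_le_exp, abs_mul]
    nlinarith [abs_nonneg z]
  calc exp (t * z) ≤ 1 + t * z + t ^ 2 * (z ^ 2 * exp |t * z|) := by
        have := exp_le_one_add_add_sq_mul_exp_abs (t * z)
        rwa [mul_pow, mul_assoc] at this
    _ ≤ 1 + t * z + t ^ 2 * (2 / d ^ 2 * (exp (d * |z|) * exp |t * z|)) := by
        rw [← mul_assoc (2 / d ^ 2)]
        gcongr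
    _ ≤ 1 + t * z + 2 / d ^ 2 * t ^ 2 * exp (β * |z|) := by
        rw [mul_left_comm, ← mul_assoc]
        gcongr

theorem exp_sum_le_one_add_sum_mul_exp_div {ι : Type*} {s : Finset ι} {w a : ι → ℝ}
    (hw : ∀ i ∈ s, 0 < w i) (hw1 : ∑ i ∈ s, w i ≤ 1) :
    exp (∑ i ∈ s, a i) ≤ 1 + ∑ i ∈ s, w i * exp (a i / w i) := by
  have h := convexOn_exp.map_add_sum_le (t := s) (w := w) (p := fun i => a i / w i)
    (v := 1 - ∑ i ∈ s, w i) (q := 0) (fun i hi => (hw i hi).le) (by ring)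
    (fun _ _ => Set.mem_univ _) (by linarith) (Set.mem_univ _)
  have hsum : ∑ i ∈ s, w i * (a i / w i) = ∑ i ∈ s, a i :=
    sum_congr rfl fun i hi => mul_div_cancel₀ _ (hw i hi).ne'
  have hw0 : 0 ≤ ∑ i ∈ s, w i := sum_nonneg fun i hi => (hw i hi).le
  simp only [smul_eq_mul, mul_zero, zero_add, hsum, exp_zero, mul_one] at h
  linarith

structure HasLocalSubgaussianMGF {Ω : Type*} [MeasurableSpace Ω] (X : Ω → ℝ) (K r : ℝ)
    (μ : Measure Ω) : Prop where
  integrable_exp_mul : ∀ t, |t| ≤ r → Integrable (fun ω => exp (t * X ω)) μ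
  mgf_le : ∀ t, |t| ≤ r → mgf X μ t ≤ exp (K * t ^ 2)

namespace HasLocalSubgaussianMGF

variable {Ω : Type*} [MeasurableSpace Ω] {μ : Measure Ω} {X : Ω → ℝ} {K r : ℝ}

theorem of_integral_eq_zero [IsProbabilityMeasure μ] {β d : ℝ} (hX : AEMeasurable X μ)
    (hexp : Integrable (fun ω => exp (β * |X ω|)) μ) (hint : Integrable X μ)
    (hmean : ∫ ω, X ω ∂μ = 0) (hd : 0 < d) :
    HasLocalSubgaussianMGF X (2 / d ^ 2 * ∫ ω, exp (β * |X ω|) ∂μ) (β - d) μ where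
  integrable_exp_mul t ht := by
    refine hexp.mono' (by fun_prop) (ae_of_all _ fun ω => ?_)
    rw [norm_of_nonneg (exp_pos _).le, exp_le_exp]
    calc t * X ω ≤ |t| * |X ω| := by rw [← abs_mul]; exact le_abs_self _
      _ ≤ β * |X ω| := by gcongr; linarith
  mgf_le t ht := by
    have hbound := exp_mul_le_one_add_mul_add_sq_mul_exp_mul_abs hd (t := t) (β := β)
      (by linarith)
    have hlin : Integrable (fun ω => 1 + t * X ω) μ := (integrable_const 1).add (hint.const_mul t)
    have hdom : Integrable (fun ω => 1 + t * X ω + 2 / d ^ 2 * t ^ 2 * exp (β * |X ω|)) μ :=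
      hlin.add (hexp.const_mul _)
    calc mgf X μ t ≤ ∫ ω, (1 + t * X ω + 2 / d ^ 2 * t ^ 2 * exp (β * |X ω|)) ∂μ :=
          integral_mono_of_nonneg (ae_of_all _ fun ω => (exp_pos _).le) hdom
            (ae_of_all _ fun ω => hbound (X ω))
      _ = 1 + 2 / d ^ 2 * (∫ ω, exp (β * |X ω|) ∂μ) * t ^ 2 := by
          rw [integral_add hlin (hexp.const_mul _), integral_add (integrable_const 1)
            (hint.const_mul t), integral_const_mul, integral_const_mul, hmean]
          simp only [integral_const, probReal_univ, smul_eq_mul, mul_one, mul_zero, add_zero]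
          ring
      _ ≤ exp (2 / d ^ 2 * (∫ ω, exp (β * |X ω|) ∂μ) * t ^ 2) := by
          linarith [add_one_le_exp (2 / d ^ 2 * (∫ ω, exp (β * |X ω|) ∂μ) * t ^ 2)]

theorem const_mul (h : HasLocalSubgaussianMGF X K r μ) {c : ℝ} (hc : 0 < c) :
    HasLocalSubgaussianMGF (fun ω => c * X ω) (K * c ^ 2) (r / c) μ where
  integrable_exp_mul t ht := by
    simp_rw [← mul_assoc]
    refine h.integrable_exp_mul _ ?_
    rwa [abs_mul, abs_of_pos hc, ← le_div_iff₀ hc]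
  mgf_le t ht := by
    rw [mgf_const_mul]
    calc mgf X μ (c * t) ≤ exp (K * (c * t) ^ 2) :=
          h.mgf_le _ (by rwa [abs_mul, abs_of_pos hc, mul_comm, ← le_div_iff₀ hc])
      _ = exp (K * c ^ 2 * t ^ 2) := by ring_nf

theorem congr_identDistrib {Ω' : Type*} [MeasurableSpace Ω'] {μ' : Measure Ω'} {Y : Ω' → ℝ}
    (h : HasLocalSubgaussianMGF X K r μ) (hXY : IdentDistrib X Y μ μ') :
    HasLocalSubgaussianMGF Y K r μ' where
  integrable_exp_mul t ht :=
    (hXY.comp (measurable_const_mul t).exp).integrable_iff.1 (h.integrable_exp_mul t ht)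
  mgf_le t ht := mgf_congr_identDistrib hXY ▸ h.mgf_le t ht

theorem sum_of_iIndepFun {ι : Type*} {Y : ι → Ω → ℝ} (hindep : iIndepFun Y μ)
    (hY : ∀ i, Measurable (Y i)) {K : ι → ℝ} {s : Finset ι}
    (h : ∀ i ∈ s, HasLocalSubgaussianMGF (Y i) (K i) r μ) :
    HasLocalSubgaussianMGF (fun ω => ∑ i ∈ s, Y i ω) (∑ i ∈ s, K i) r μ where
  integrable_exp_mul t ht := by
    have : IsProbabilityMeasure μ := hindep.isProbabilityMeasure
    simpa only [Finset.sum_apply] using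
      hindep.integrable_exp_mul_sum hY fun i hi => (h i hi).integrable_exp_mul t ht
  mgf_le t ht := by
    have hsum : (fun ω => ∑ i ∈ s, Y i ω) = ∑ i ∈ s, Y i := by ext; simp only [Finset.sum_apply]
    rw [hsum, hindep.mgf_sum hY, sum_mul, exp_sum]
    exact prod_le_prod (fun _ _ => mgf_nonneg) fun i hi => (h i hi).mgf_le t ht

theorem lintegral_exp_mul_abs_le (h : HasLocalSubgaussianMGF X K r μ) {t : ℝ} (ht : |t| ≤ r) :
    ∫⁻ ω, ENNReal.ofReal (exp (t * |X ω|)) ∂μ ≤ ENNReal.ofReal (2 * exp (K * t ^ 2)) := by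
  have hpos := h.integrable_exp_mul t ht
  have hneg := h.integrable_exp_mul (-t) (by rwa [abs_neg])
  have hle : ∀ ω, exp (t * |X ω|) ≤ exp (t * X ω) + exp (-t * X ω) := fun ω => by
    rcases abs_cases (X ω) with ⟨hX, -⟩ | ⟨hX, -⟩
    · rw [hX]; linarith [exp_pos (-t * X ω)]
    · rw [hX, mul_neg, ← neg_mul]; linarith [exp_pos (t * X ω)]
  have hsum : Integrable (fun ω => exp (t * X ω) + exp (-t * X ω)) μ := hpos.add hneg
  have hmgf := add_le_add (h.mgf_le t ht) (h.mgf_le (-t) (by rwa [abs_neg]))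
  rw [neg_sq] at hmgf
  calc ∫⁻ ω, ENNReal.ofReal (exp (t * |X ω|)) ∂μ
      ≤ ∫⁻ ω, ENNReal.ofReal (exp (t * X ω) + exp (-t * X ω)) ∂μ :=
        lintegral_mono fun ω => ENNReal.ofReal_le_ofReal (hle ω)
    _ = ENNReal.ofReal (mgf X μ t + mgf X μ (-t)) := by
        rw [← ofReal_integral_eq_lintegral_ofReal hsum
          (ae_of_all _ fun ω => by positivity), integral_add hpos hneg]
        rfl
    _ ≤ ENNReal.ofReal (2 * exp (K * t ^ 2)) := ENNReal.ofReal_le_ofReal (by linarith)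

end HasLocalSubgaussianMGF

theorem hasLocalSubgaussianMGF_sum_Icc {Ω : Type*} [MeasurableSpace Ω] {μ : Measure Ω}
    {X : ℕ → ℕ → Ω → ℝ} {K r : ℝ} (hmeas : ∀ k j, Measurable (X k j))
    (hdist : ∀ k j : ℕ, 1 ≤ j → j ≤ 2 ^ k →
      Measure.map (X k j) μ = Measure.map (fun ω => (2 : ℝ) ^ (-(k : ℤ)) * X 0 1 ω) μ)
    (hindep : ∀ k : ℕ, iIndepFun (fun j : Fin (2 ^ k) => X k ((j : ℕ) + 1)) μ)
    (h0 : HasLocalSubgaussianMGF (X 0 1) K r μ) (k : ℕ) :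
    HasLocalSubgaussianMGF (fun ω => ∑ j ∈ Icc 1 (2 ^ k), X k j ω) (K / 2 ^ k) (r * 2 ^ k) μ := by
  have hscale : HasLocalSubgaussianMGF (fun ω => ((2 : ℝ) ^ k)⁻¹ * X 0 1 ω)
      (K * ((2 : ℝ) ^ k)⁻¹ ^ 2) (r * 2 ^ k) μ := by
    simpa only [div_inv_eq_mul] using h0.const_mul (c := ((2 : ℝ) ^ k)⁻¹) (by positivity)
  have hlevel : ∀ i : Fin (2 ^ k), HasLocalSubgaussianMGF (X k ((i : ℕ) + 1))
      (K * ((2 : ℝ) ^ k)⁻¹ ^ 2) (r * 2 ^ k) μ := fun i => by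
    refine hscale.congr_identDistrib ⟨by fun_prop, (hmeas k _).aemeasurable, ?_⟩
    rw [hdist k _ (Nat.le_add_left 1 i) i.isLt]
    simp [zpow_neg]
  have hsum := HasLocalSubgaussianMGF.sum_of_iIndepFun (hindep k) (fun i => hmeas k _)
    (s := univ) fun i _ => hlevel i
  convert hsum using 1
  · ext ω
    rw [Fin.sum_univ_eq_sum_range (fun i => X k (i + 1) ω), range_eq_Ico,
      sum_Ico_add' (fun j => X k j ω)]
    rfl
  · rw [sum_const, card_univ, Fintype.card_fin, nsmul_eq_mul]
    push_cast
    field_simp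

theorem sum_range_two_scale_weights_le_one {θ : ℝ} (hθ : 0 ≤ θ) (hθ1 : 2 * θ < 1) (n : ℕ) :
    ∑ k ∈ range n, (θ / 2 ^ k + (1 - 2 * θ) / 4 * (3 / 4) ^ k) ≤ 1 := by
  have hhalf : ∑ k ∈ range n, θ / 2 ^ k ≤ 2 * θ := by
    simp_rw [div_eq_mul_one_div θ, ← one_div_pow, ← mul_sum]
    nlinarith [sum_geometric_two_le n]
  have hthree : ∑ k ∈ range n, (3 / 4 : ℝ) ^ k ≤ 4 := by
    have h := geom_sum_Ico_le_of_lt_one (x := (3 / 4 : ℝ)) (m := 0) (n := n) (by norm_num)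
      (by norm_num)
    rw [← range_eq_Ico] at h
    exact h.trans_eq (by norm_num)
  rw [sum_add_distrib, ← mul_sum]
  nlinarith

theorem sq_le_two_pow_mul_sq_mul_three_fourths_pow (e : ℝ) (k : ℕ) :
    e ^ 2 ≤ 2 ^ k * (e * (3 / 4) ^ k) ^ 2 := calc
  e ^ 2 ≤ e ^ 2 * (9 / 8) ^ k := le_mul_of_one_le_right (sq_nonneg e) (one_le_pow₀ (by norm_num))
  _ = 2 ^ k * (e * (3 / 4) ^ k) ^ 2 := by
    rw [mul_pow e, ← pow_mul, mul_comm k 2, pow_mul, mul_left_comm, ← mul_pow]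
    norm_num

section Series

variable {Ω : Type*} [MeasurableSpace Ω] {μ : Measure Ω}

theorem lintegral_iSup_exp_sum_le [IsProbabilityMeasure μ] {f : ℕ → Ω → ℝ}
    (hf : ∀ k, Measurable (f k)) {w : ℕ → ℝ} (hw : ∀ k, 0 < w k)
    (hw1 : ∀ n, ∑ k ∈ range n, w k ≤ 1) {C : ℝ≥0∞}
    (hC : ∀ k, ∫⁻ ω, ENNReal.ofReal (exp (f k ω / w k)) ∂μ ≤ C) :
    ∫⁻ ω, ⨆ n, ENNReal.ofReal (exp (∑ k ∈ range n, f k ω)) ∂μ ≤ 1 + C := by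
  set g : ℕ → Ω → ℝ≥0∞ := fun k ω => ENNReal.ofReal (w k) * ENNReal.ofReal (exp (f k ω / w k))
  have hexpm : ∀ k, Measurable fun ω => ENNReal.ofReal (exp (f k ω / w k)) := fun k => by
    have := hf k
    fun_prop
  have hpt : ∀ ω, ⨆ n, ENNReal.ofReal (exp (∑ k ∈ range n, f k ω)) ≤ 1 + ∑' k, g k ω :=
    fun ω => iSup_le fun n => calc
      ENNReal.ofReal (exp (∑ k ∈ range n, f k ω))
          ≤ ENNReal.ofReal (1 + ∑ k ∈ range n, w k * exp (f k ω / w k)) :=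
        ENNReal.ofReal_le_ofReal (exp_sum_le_one_add_sum_mul_exp_div (fun k _ => hw k) (hw1 n))
      _ = 1 + ∑ k ∈ range n, g k ω := by
        have hnonneg : ∀ k, 0 ≤ w k * exp (f k ω / w k) := fun k => by
          have := hw k
          positivity
        rw [ENNReal.ofReal_add zero_le_one (sum_nonneg fun k _ => hnonneg k), ENNReal.ofReal_one,
          ENNReal.ofReal_sum_of_nonneg fun k _ => hnonneg k]
        simp_rw [g, ENNReal.ofReal_mul (hw _).le]
      _ ≤ 1 + ∑' k, g k ω := by gcongr; exact ENNReal.sum_le_tsum _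
  have hw1' : ∑' k, ENNReal.ofReal (w k) ≤ 1 := ENNReal.tsum_le_of_sum_range_le fun n => by
    rw [← ENNReal.ofReal_sum_of_nonneg fun k _ => (hw k).le]
    exact ENNReal.ofReal_le_one.2 (hw1 n)
  calc ∫⁻ ω, ⨆ n, ENNReal.ofReal (exp (∑ k ∈ range n, f k ω)) ∂μ
      ≤ ∫⁻ ω, 1 + ∑' k, g k ω ∂μ := lintegral_mono hpt
    _ = 1 + ∑' k, ENNReal.ofReal (w k) * ∫⁻ ω, ENNReal.ofReal (exp (f k ω / w k)) ∂μ := by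
        rw [lintegral_add_left measurable_const, lintegral_const, measure_univ, one_mul,
          lintegral_tsum fun k => ((hexpm k).const_mul _).aemeasurable]
        simp_rw [lintegral_const_mul _ (hexpm _)]
    _ ≤ 1 + (∑' k, ENNReal.ofReal (w k)) * C := by
        rw [← ENNReal.tsum_mul_right]
        gcongr with k
        exact hC k
    _ ≤ 1 + C := by
        gcongr
        exact (mul_le_mul_left hw1' C).trans_eq (one_mul C)

theorem summable_of_iSup_ofReal_exp_mul_sum_ne_top {a : ℕ → ℝ} (ha : ∀ k, 0 ≤ a k) {b : ℝ}
    (hb : 0 < b) (h : ⨆ n, ENNReal.ofReal (exp (b * ∑ k ∈ range n, a k)) ≠ ∞) : Summable a := by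
  set F := fun n => ENNReal.ofReal (exp (b * ∑ k ∈ range n, a k))
  refine summable_of_sum_range_le ha (c := (⨆ n, F n).toReal / b) fun n => ?_
  rw [le_div_iff₀' hb]
  calc b * ∑ k ∈ range n, a k ≤ exp (b * ∑ k ∈ range n, a k) := by
        linarith [add_one_le_exp (b * ∑ k ∈ range n, a k)]
    _ ≤ (⨆ n, F n).toReal := (ENNReal.ofReal_le_iff_le_toReal h).1 (le_iSup F n)

theorem ofReal_exp_mul_tsum_le_iSup {a : ℕ → ℝ} (ha : Summable fun k => |a k|) (β : ℝ) :
    ENNReal.ofReal (exp (β * ∑' k, a k)) ≤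
      ⨆ n, ENNReal.ofReal (exp (|β| * ∑ k ∈ range n, |a k|)) := by
  have hlim : Tendsto (fun n => ENNReal.ofReal (exp (|β| * ∑ k ∈ range n, |a k|))) atTop
      (nhds (ENNReal.ofReal (exp (|β| * ∑' k, |a k|)))) :=
    ((ENNReal.continuous_ofReal.comp continuous_exp).tendsto _).comp
      (ha.hasSum.tendsto_sum_nat.const_mul _)
  have habs : |∑' k, a k| ≤ ∑' k, |a k| := by
    have h := norm_tsum_le_tsum_norm (f := a) (by simpa only [Real.norm_eq_abs] using ha)
    simpa only [Real.norm_eq_abs] using h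
  calc ENNReal.ofReal (exp (β * ∑' k, a k)) ≤ ENNReal.ofReal (exp (|β| * ∑' k, |a k|)) := by
        refine ENNReal.ofReal_le_ofReal (exp_le_exp.2 ?_)
        calc β * ∑' k, a k ≤ |β| * |∑' k, a k| := by rw [← abs_mul]; exact le_abs_self _
          _ ≤ |β| * ∑' k, |a k| := by gcongr
    _ ≤ ⨆ n, ENNReal.ofReal (exp (|β| * ∑ k ∈ range n, |a k|)) :=
        le_of_tendsto' hlim (le_iSup fun n => ENNReal.ofReal (exp (|β| * ∑ k ∈ range n, |a k|)))

theorem lintegral_iSup_exp_mul_sum_abs_lt_top [IsProbabilityMeasure μ] {T : ℕ → Ω → ℝ}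
    {K r b : ℝ} (hT : ∀ k, Measurable (T k))
    (hTK : ∀ k, HasLocalSubgaussianMGF (T k) (K / 2 ^ k) (r * 2 ^ k) μ)
    (hK : 0 ≤ K) (hb : 0 ≤ b) (hbr : 2 * b < r) :
    ∫⁻ ω, ⨆ n, ENNReal.ofReal (exp (b * ∑ k ∈ range n, |T k ω|)) ∂μ < ∞ := by
  have hr : 0 < r := by linarith
  set θ := b / r
  set e := (1 - 2 * θ) / 4
  set w : ℕ → ℝ := fun k => θ / 2 ^ k + e * (3 / 4) ^ k
  have hθ : 0 ≤ θ := by positivity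
  have hθ1 : 2 * θ < 1 := by rw [mul_div_assoc', div_lt_one hr]; exact hbr
  have he : 0 < e := by simp only [e]; linarith
  have hw : ∀ k, 0 < w k := fun k => by positivity
  have hC : ∀ k, ∫⁻ ω, ENNReal.ofReal (exp (b * |T k ω| / w k)) ∂μ
      ≤ ENNReal.ofReal (2 * exp (K * (b / e) ^ 2)) := by
    intro k
    have hwindow : |b / w k| ≤ r * 2 ^ k := by
      rw [abs_of_nonneg (by have := hw k; positivity), div_le_iff₀ (hw k)]
      calc b = r * 2 ^ k * (θ / 2 ^ k) := by simp only [θ]; field_simp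
        _ ≤ r * 2 ^ k * w k := by gcongr; exact le_add_of_nonneg_right (by positivity)
    have hw2 : e ^ 2 ≤ 2 ^ k * w k ^ 2 :=
      (sq_le_two_pow_mul_sq_mul_three_fourths_pow e k).trans
        (by gcongr; exact le_add_of_nonneg_left (by positivity))
    have hexponent : K / 2 ^ k * (b / w k) ^ 2 ≤ K * (b / e) ^ 2 := calc
      K / 2 ^ k * (b / w k) ^ 2 = K * (b ^ 2 / (2 ^ k * w k ^ 2)) := by
        rw [div_pow, div_mul_div_comm, mul_div_assoc]
      _ ≤ K * (b ^ 2 / e ^ 2) := by gcongr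
      _ = K * (b / e) ^ 2 := by rw [div_pow b e]
    simp_rw [mul_div_right_comm b]
    exact ((hTK k).lintegral_exp_mul_abs_le hwindow).trans
      (ENNReal.ofReal_le_ofReal (by gcongr))
  have h := lintegral_iSup_exp_sum_le (fun k => (hT k).abs.const_mul b) hw
    (sum_range_two_scale_weights_le_one hθ hθ1) hC
  simp_rw [← mul_sum] at h
  exact h.trans_lt (ENNReal.add_lt_top.2 ⟨ENNReal.one_lt_top, ENNReal.ofReal_lt_top⟩)

end Series

theorem stmt5 {Ω : Type*} [MeasurableSpace Ω] (μ : Measure Ω) [IsProbabilityMeasure μ]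
    (β₀ : ℝ) (hβ₀ : 0 < β₀) (X : ℕ → ℕ → Ω → ℝ)
    (hmeas : ∀ k j, Measurable (X k j))
    (hexp : Integrable (fun ω => Real.exp (β₀ * |X 0 1 ω|)) μ)
    (hint : Integrable (X 0 1) μ) (hmean : ∫ ω, X 0 1 ω ∂μ = 0)
    (hdist : ∀ k j : ℕ, 1 ≤ j → j ≤ 2 ^ k →
      Measure.map (X k j) μ = Measure.map (fun ω => (2 : ℝ) ^ (-(k : ℤ)) * X 0 1 ω) μ)
    (hindep : ∀ k : ℕ, ProbabilityTheory.iIndepFun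
      (fun j : Fin (2 ^ k) => X k ((j : ℕ) + 1)) μ) :
    ∃ Y : Ω → ℝ,
      (∀ᵐ ω ∂μ, Tendsto
        (fun n => ∑ k ∈ Finset.range (n + 1), ∑ j ∈ Finset.Icc 1 (2 ^ k), X k j ω)
        atTop (nhds (Y ω))) ∧
      ∀ β : ℝ, |β| < β₀ / 2 → Integrable (fun ω => Real.exp (β * Y ω)) μ := by
  set T : ℕ → Ω → ℝ := fun k ω => ∑ j ∈ Icc 1 (2 ^ k), X k j ω
  have hT : ∀ k, Measurable (T k) := fun k => by
    simp only [T]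
    fun_prop
  have hfin : ∀ b, 0 ≤ b → b < β₀ / 2 →
      ∫⁻ ω, ⨆ n, ENNReal.ofReal (exp (b * ∑ k ∈ range n, |T k ω|)) ∂μ < ∞ := fun b hb hbβ =>
    lintegral_iSup_exp_mul_sum_abs_lt_top hT
      (hasLocalSubgaussianMGF_sum_Icc hmeas hdist hindep
        (.of_integral_eq_zero (hmeas 0 1).aemeasurable hexp hint hmean (d := β₀ / 2 - b)
          (by linarith)))
      (by positivity) hb (by linarith)
  have hsummable : ∀ᵐ ω ∂μ, Summable fun k => |T k ω| := by
    filter_upwards [ae_lt_top (by fun_prop) (hfin (β₀ / 4) (by positivity) (by linarith)).ne]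
      with ω hω
    exact summable_of_iSup_ofReal_exp_mul_sum_ne_top (fun k => abs_nonneg _) (by positivity) hω.ne
  refine ⟨fun ω => ∑' k, T k ω, ?_, fun β hβ => ⟨by fun_prop, ?_⟩⟩
  · filter_upwards [hsummable] with ω hω
    exact hω.of_abs.hasSum.tendsto_sum_nat.comp (tendsto_add_atTop_nat 1)
  · rw [hasFiniteIntegral_iff_ofReal (ae_of_all _ fun ω => (exp_pos _).le)]
    refine (lintegral_mono_ae (hsummable.mono fun ω hω => ?_)).trans_lt (hfin |β| (abs_nonneg β) hβ)
    exact ofReal_exp_mul_tsum_le_iSup hω β
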